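/- arXiv:1605.00584 — 7 statements merged into one kernel-verified Lean document; each statement's English description precedes it below -/
import Mathlib

section
/- If |λ| < 1 and |β| < 1, then every fixed point of f is Lyapunov stable. -/
open Filter Topology

/-- The clipping function Φ. -/
noncomputable def Phi (t : ℝ) : ℝ := if t < -1 then -1 else if t ≤ 1 then t else 1

/-- The map f(x,s) = (λx + a·s, Φ(s + x' − x)). -/
noncomputable def f (lam a : ℝ) (p : ℝ × ℝ) : ℝ × ℝ :=
  (lam * p.1 + a * p.2, Phi (p.2 + (lam * p.1 + a * p.2) - p.1))

/-- Membership in the strip L = {(x,s) : |s| ≤ 1}. -/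
def inL (p : ℝ × ℝ) : Prop := |p.2| ≤ 1

/-- A trajectory of the map f, staying in the strip L. -/
def IsTraj (lam a : ℝ) (z : ℕ → ℝ × ℝ) : Prop :=
  (∀ n, inL (z n)) ∧ ∀ n, z (n + 1) = f lam a (z n)

/-- The set of fixed points of f in the strip L. -/
def fixedSet (lam a : ℝ) : Set (ℝ × ℝ) := {p | inL p ∧ f lam a p = p}

/-- Lyapunov stability of a fixed point. -/
def IsStableFixed (lam a : ℝ) (P : ℝ × ℝ) : Prop :=
  ∀ ε > 0, ∃ δ > 0, ∀ z : ℕ → ℝ × ℝ, IsTraj lam a z → dist (z 0) P < δ →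
    ∀ n, dist (z n) P < ε

/-- Semi-stability of a fixed point. -/
def IsSemiStable (lam a : ℝ) (P : ℝ × ℝ) : Prop :=
  ∃ U₁ U₂ : Set (ℝ × ℝ), IsOpen U₁ ∧ IsOpen U₂ ∧
    U₁ ⊆ {p | |p.2| < 1} ∧ U₂ ⊆ {p | |p.2| < 1} ∧
    P ∈ frontier U₁ ∧ P ∈ frontier U₂ ∧
    (∀ ε > 0, ∃ δ > 0, ∀ z : ℕ → ℝ × ℝ, IsTraj lam a z → z 0 ∈ U₁ →
      dist (z 0) P < δ → ∀ n, dist (z n) P < ε) ∧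
    (∃ ε₀ > 0, ∀ z : ℕ → ℝ × ℝ, IsTraj lam a z → z 0 ∈ U₂ →
      ∃ n, ε₀ ≤ dist (z n) P)

/-- Stability of a set (e.g. a periodic orbit) for the dynamics of f. -/
def IsStableSet (lam a : ℝ) (O : Set (ℝ × ℝ)) : Prop :=
  ∀ ε > 0, ∃ δ > 0, ∀ z : ℕ → ℝ × ℝ, IsTraj lam a z →
    Metric.infDist (z 0) O < δ → ∀ n, Metric.infDist (z n) O < ε

/-- O is a periodic orbit of f. -/
def IsPeriodicOrbit (lam a : ℝ) (O : Set (ℝ × ℝ)) : Prop :=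
  ∃ P : ℝ × ℝ, ∃ m : ℕ, 1 ≤ m ∧ inL P ∧ (f lam a)^[m] P = P ∧
    O = {q | ∃ i < m, (f lam a)^[i] P = q}

/-- P is a periodic point of minimal period k. -/
def HasMinPeriod (lam a : ℝ) (P : ℝ × ℝ) (k : ℕ) : Prop :=
  (f lam a)^[k] P = P ∧ ∀ j, 1 ≤ j → j < k → (f lam a)^[j] P ≠ P

lemma phi_between (s t : ℝ) (hs : |s| ≤ 1) :
    min 0 t ≤ Phi (s + t) - s ∧ Phi (s + t) - s ≤ max 0 t := by
  rw [abs_le] at hs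
  unfold Phi
  split_ifs with hA hB
  · constructor
    · have ht : t < -1 - s := by linarith
      have h0 : min 0 t ≤ t := min_le_right _ _
      linarith
    · have : (0:ℝ) ≤ max 0 t := le_max_left _ _
      linarith
  · constructor
    · have : min 0 t ≤ t := min_le_right _ _
      linarith
    · have : t ≤ max 0 t := le_max_right _ _
      linarith
  · constructor
    · have : min 0 t ≤ 0 := min_le_left _ _
      linarith
    · have ht : 1 - s < t := by linarith
      have : t ≤ max 0 t := le_max_right _ _
      linarith

/-- If |λ| < 1 and |β| < 1, every fixed point of f is Lyapunov stable. -/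
theorem stmt1 (lam a : ℝ) (h1 : |lam| < 1) (h2 : |lam + a| < 1) :
    ∀ P ∈ fixedSet lam a, IsStableFixed lam a P := by
  rintro P ⟨hPL, hPfix⟩ ε hε
  set ρ : ℝ := max |lam| |lam + a| with hρdef
  have hρ0 : 0 ≤ ρ := le_max_of_le_left (abs_nonneg _)
  have hρ1 : ρ < 1 := max_lt h1 h2
  have h1ρ : 0 < 1 - ρ := by linarith
  set C : ℝ := (|lam - 1| + |a|) / (1 - ρ) + 1 with hCdef
  have hC0 : 0 < C := by
    rw [hCdef]
    have : 0 ≤ (|lam - 1| + |a|) / (1 - ρ) :=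
      div_nonneg (by positivity) (le_of_lt h1ρ)
    linarith
  refine ⟨ε / C, by positivity, ?_⟩
  intro z hz hz0 n
  obtain ⟨hL, hstep⟩ := hz
  -- fixed point equation
  have hfix1 : lam * P.1 + a * P.2 = P.1 := congrArg Prod.fst hPfix
  -- coordinates of the step
  have hx : ∀ m, (z (m+1)).1 = lam * (z m).1 + a * (z m).2 := by
    intro m; rw [hstep m]; rfl
  set D : ℕ → ℝ := fun m => (z (m+1)).1 - (z m).1 with hDdef
  set Δ : ℕ → ℝ := fun m => (z (m+1)).2 - (z m).2 with hΔdef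
  have hs2 : ∀ m, (z (m+1)).2 = Phi ((z m).2 + D m) := by
    intro m
    have e : (z m).2 + D m = (z m).2 + (lam * (z m).1 + a * (z m).2) - (z m).1 := by
      simp only [hDdef]; rw [hx m]; ring
    rw [e, hstep m]; rfl
  have hbet : ∀ m, min 0 (D m) ≤ Δ m ∧ Δ m ≤ max 0 (D m) := by
    intro m
    have h := phi_between ((z m).2) (D m) (hL m)
    have e : Δ m = Phi ((z m).2 + D m) - (z m).2 := by
      simp only [hΔdef]; rw [hs2 m]
    rw [e]; exact h
  -- contraction of D
  have hcontr : ∀ m, |D (m+1)| ≤ ρ * |D m| := by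
    intro m
    have hD : D (m+1) = lam * (D m - Δ m) + (lam + a) * Δ m := by
      simp only [hDdef, hΔdef]
      rw [hx (m+1), hx m]
      ring
    have habs : |D m - Δ m| + |Δ m| = |D m| := by
      obtain ⟨hmin, hmax⟩ := hbet m
      rcases le_total 0 (D m) with h | h
      · rw [min_eq_left h] at hmin
        rw [max_eq_right h] at hmax
        rw [abs_of_nonneg (by linarith), abs_of_nonneg hmin, abs_of_nonneg h]
        ring
      · rw [min_eq_right h] at hmin
        rw [max_eq_left h] at hmax
        rw [abs_of_nonpos (by linarith), abs_of_nonpos hmax, abs_of_nonpos h]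
        ring
    calc |D (m+1)| = |lam * (D m - Δ m) + (lam + a) * Δ m| := by rw [hD]
      _ ≤ |lam * (D m - Δ m)| + |(lam + a) * Δ m| := abs_add_le _ _
      _ = |lam| * |D m - Δ m| + |lam + a| * |Δ m| := by rw [abs_mul, abs_mul]
      _ ≤ ρ * |D m - Δ m| + ρ * |Δ m| := by
          have hl : |lam| ≤ ρ := le_max_left _ _
          have hb : |lam + a| ≤ ρ := le_max_right _ _
          have h3 := abs_nonneg (D m - Δ m)
          have h4 := abs_nonneg (Δ m)
          nlinarith
      _ = ρ * |D m| := by rw [← habs]; ring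
  have hgeom : ∀ m, |D m| ≤ ρ ^ m * |D 0| := by
    intro m
    induction m with
    | zero => simp
    | succ k ih =>
        calc |D (k+1)| ≤ ρ * |D k| := hcontr k
          _ ≤ ρ * (ρ ^ k * |D 0|) := by gcongr
          _ = ρ ^ (k+1) * |D 0| := by ring
  -- cumulative bounds
  have hcum : ∀ m, |(z m).1 - (z 0).1| ≤ (1 - ρ ^ m) / (1 - ρ) * |D 0| ∧
      |(z m).2 - (z 0).2| ≤ (1 - ρ ^ m) / (1 - ρ) * |D 0| := by
    intro m
    induction m with
    | zero => simp
    | succ k ih =>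
        obtain ⟨ih1, ih2⟩ := ih
        have hDk := hgeom k
        have hΔk : |Δ k| ≤ ρ ^ k * |D 0| := by
          have habs : |Δ k| ≤ |D k| := by
            obtain ⟨hmin, hmax⟩ := hbet k
            rcases le_total 0 (D k) with h | h
            · rw [min_eq_left h] at hmin
              rw [max_eq_right h] at hmax
              rw [abs_of_nonneg hmin, abs_of_nonneg h]; linarith
            · rw [min_eq_right h] at hmin
              rw [max_eq_left h] at hmax
              rw [abs_of_nonpos hmax, abs_of_nonpos h]; linarith
          linarith
        have key : (1 - ρ ^ k) / (1 - ρ) * |D 0| + ρ ^ k * |D 0|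
            = (1 - ρ ^ (k+1)) / (1 - ρ) * |D 0| := by
          field_simp
          ring
        constructor
        · calc |(z (k+1)).1 - (z 0).1| = |((z k).1 - (z 0).1) + D k| := by
                simp only [hDdef]; ring_nf
            _ ≤ |(z k).1 - (z 0).1| + |D k| := abs_add_le _ _
            _ ≤ (1 - ρ ^ k) / (1 - ρ) * |D 0| + ρ ^ k * |D 0| := by gcongr
            _ = (1 - ρ ^ (k+1)) / (1 - ρ) * |D 0| := key
        · calc |(z (k+1)).2 - (z 0).2| = |((z k).2 - (z 0).2) + Δ k| := by
                simp only [hΔdef]; ring_nf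
            _ ≤ |(z k).2 - (z 0).2| + |Δ k| := abs_add_le _ _
            _ ≤ (1 - ρ ^ k) / (1 - ρ) * |D 0| + ρ ^ k * |D 0| := by gcongr
            _ = (1 - ρ ^ (k+1)) / (1 - ρ) * |D 0| := key
  have hfrac : ∀ m : ℕ, (1 - ρ ^ m) / (1 - ρ) ≤ 1 / (1 - ρ) := by
    intro m
    have hpm : 0 ≤ ρ ^ m := pow_nonneg hρ0 m
    gcongr
    linarith
  -- initial distance bounds
  have hdd : max |(z 0).1 - P.1| |(z 0).2 - P.2| < ε / C := by
    rw [Prod.dist_eq, Real.dist_eq, Real.dist_eq] at hz0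
    exact hz0
  have hd0x : |(z 0).1 - P.1| < ε / C := lt_of_le_of_lt (le_max_left _ _) hdd
  have hd0s : |(z 0).2 - P.2| < ε / C := lt_of_le_of_lt (le_max_right _ _) hdd
  have hD0 : |D 0| ≤ (|lam - 1| + |a|) * (ε / C) := by
    have hD0e : D 0 = (lam - 1) * ((z 0).1 - P.1) + a * ((z 0).2 - P.2) := by
      simp only [hDdef]
      rw [hx 0]
      nlinarith [hfix1]
    calc |D 0| ≤ |(lam - 1) * ((z 0).1 - P.1)| + |a * ((z 0).2 - P.2)| := by
          rw [hD0e]; exact abs_add_le _ _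
      _ = |lam - 1| * |(z 0).1 - P.1| + |a| * |(z 0).2 - P.2| := by
          rw [abs_mul, abs_mul]
      _ ≤ |lam - 1| * (ε / C) + |a| * (ε / C) := by
          have h3 := abs_nonneg (lam - 1)
          have h4 := abs_nonneg a
          nlinarith
      _ = (|lam - 1| + |a|) * (ε / C) := by ring
  have hcumn : |(z n).1 - (z 0).1| ≤ 1 / (1 - ρ) * |D 0| ∧
      |(z n).2 - (z 0).2| ≤ 1 / (1 - ρ) * |D 0| := by
    obtain ⟨hh1, hh2⟩ := hcum n
    have hmono : (1 - ρ ^ n) / (1 - ρ) * |D 0| ≤ 1 / (1 - ρ) * |D 0| :=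
      mul_le_mul_of_nonneg_right (hfrac n) (abs_nonneg _)
    exact ⟨le_trans hh1 hmono, le_trans hh2 hmono⟩
  have hεC : C * (ε / C) = ε := by field_simp
  have hkey : 1 / (1 - ρ) * |D 0| + ε / C ≤ ε := by
    have h5 : 1 / (1 - ρ) * |D 0| ≤ 1 / (1 - ρ) * ((|lam - 1| + |a|) * (ε / C)) :=
      mul_le_mul_of_nonneg_left hD0 (by positivity)
    have h6 : 1 / (1 - ρ) * ((|lam - 1| + |a|) * (ε / C)) = (|lam - 1| + |a|) / (1 - ρ) * (ε / C) := by
      ring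
    have hCexp : (|lam - 1| + |a|) / (1 - ρ) * (ε / C) + ε / C = C * (ε / C) := by
      rw [hCdef]; ring
    linarith
  rw [Prod.dist_eq]
  apply max_lt
  · rw [Real.dist_eq]
    calc |(z n).1 - P.1| ≤ |(z n).1 - (z 0).1| + |(z 0).1 - P.1| := by
          have := abs_add_le ((z n).1 - (z 0).1) ((z 0).1 - P.1)
          simpa using this
      _ < 1 / (1 - ρ) * |D 0| + ε / C := by
          have := hcumn.1; linarith
      _ ≤ ε := hkey
  · rw [Real.dist_eq]
    calc |(z n).2 - P.2| ≤ |(z n).2 - (z 0).2| + |(z 0).2 - P.2| := by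
          have := abs_add_le ((z n).2 - (z 0).2) ((z 0).2 - P.2)
          simpa using this
      _ < 1 / (1 - ρ) * |D 0| + ε / C := by
          have := hcumn.2; linarith
      _ ≤ ε := hkey
end

section
/- If |λ| < 1 and |β| < 1, then every trajectory of the map f converges to a fixed point of f, i.e., for every trajectory (x_n, s_n) there exists s* ∈ [−1,1] such that (x_n, s_n) → (a·s*/(1−λ), s*) as n → ∞. -/
open Filter Topology

/-!
Write Δxₙ = xₙ₊₁ − xₙ. Because sₙ ∈ [−1, 1] and Φ only clips, sₙ₊₁ − sₙ = θₙ Δxₙ for some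
θₙ ∈ [0, 1]; hence Δxₙ₊₁ = (λ + aθₙ) Δxₙ, where λ + aθₙ lies between λ and β, so
|Δxₙ₊₁| ≤ max (|λ|, |β|) |Δxₙ| and also |Δsₙ| ≤ |Δxₙ|. The trajectory is therefore Cauchy, and
passing to the limit in xₙ₊₁ = λxₙ + a sₙ puts its limit on the segment of fixed points.
-/

lemma Phi_add_sub_mem_uIcc {s : ℝ} (hs : |s| ≤ 1) (t : ℝ) : Phi (s + t) - s ∈ Set.uIcc 0 t := by
  rw [abs_le] at hs
  rw [Set.mem_uIcc]
  unfold Phi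
  rcases le_total 0 t with ht | ht
  · left; split_ifs <;> constructor <;> linarith
  · right; split_ifs <;> constructor <;> linarith

lemma exists_mul_eq_of_mem_uIcc_zero {t y : ℝ} (h : y ∈ Set.uIcc 0 t) :
    ∃ θ ∈ Set.Icc (0 : ℝ) 1, θ * t = y := by
  rw [← segment_eq_uIcc, segment_eq_image'] at h
  simpa using h

lemma abs_add_mul_le_max {lam a θ : ℝ} (hθ : θ ∈ Set.Icc (0 : ℝ) 1) :
    |lam + a * θ| ≤ max |lam| |lam + a| := by
  obtain ⟨hθ0, hθ1⟩ := hθ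
  rcases le_total 0 a with ha | ha
  · exact abs_le_max_abs_abs (by nlinarith) (by nlinarith)
  · rw [max_comm]
    exact abs_le_max_abs_abs (by nlinarith) (by nlinarith)

lemma abs_sub_le_geometric {u : ℕ → ℝ} {ρ : ℝ} (hρ : 0 ≤ ρ)
    (h : ∀ n, |u (n + 2) - u (n + 1)| ≤ ρ * |u (n + 1) - u n|) (n : ℕ) :
    |u (n + 1) - u n| ≤ |u 1 - u 0| * ρ ^ n := by
  induction n with
  | zero => simp
  | succ k ih =>
    calc |u (k + 2) - u (k + 1)| ≤ ρ * |u (k + 1) - u k| := h k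
      _ ≤ ρ * (|u 1 - u 0| * ρ ^ k) := by gcongr
      _ = |u 1 - u 0| * ρ ^ (k + 1) := by ring

namespace IsTraj

variable {lam a : ℝ} {z : ℕ → ℝ × ℝ}

lemma fst_succ (hz : IsTraj lam a z) (n : ℕ) :
    (z (n + 1)).1 = lam * (z n).1 + a * (z n).2 := by
  rw [hz.2 n]; rfl

lemma snd_succ_sub (hz : IsTraj lam a z) (n : ℕ) :
    ∃ θ ∈ Set.Icc (0 : ℝ) 1, θ * ((z (n + 1)).1 - (z n).1) = (z (n + 1)).2 - (z n).2 := by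
  refine exists_mul_eq_of_mem_uIcc_zero ?_
  have hs : (z (n + 1)).2 = Phi ((z n).2 + ((z (n + 1)).1 - (z n).1)) := by
    rw [fst_succ hz, hz.2 n, f, add_sub_assoc]
  rw [hs]
  exact Phi_add_sub_mem_uIcc (hz.1 n) _

lemma abs_snd_sub_le (hz : IsTraj lam a z) (n : ℕ) :
    |(z (n + 1)).2 - (z n).2| ≤ |(z (n + 1)).1 - (z n).1| := by
  obtain ⟨θ, ⟨hθ0, hθ1⟩, hθ⟩ := hz.snd_succ_sub n
  rw [← hθ, abs_mul, abs_of_nonneg hθ0]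
  exact mul_le_of_le_one_left (abs_nonneg _) hθ1

lemma abs_fst_sub_succ_le (hz : IsTraj lam a z) (n : ℕ) :
    |(z (n + 2)).1 - (z (n + 1)).1| ≤ max |lam| |lam + a| * |(z (n + 1)).1 - (z n).1| := by
  obtain ⟨θ, hθ, hθeq⟩ := hz.snd_succ_sub n
  have hstep : (z (n + 2)).1 - (z (n + 1)).1 = (lam + a * θ) * ((z (n + 1)).1 - (z n).1) := by
    linear_combination hz.fst_succ (n + 1) - hz.fst_succ n - a * hθeq
  rw [hstep, abs_mul]
  gcongr
  exact abs_add_mul_le_max hθ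

lemma dist_succ_le_geometric (hz : IsTraj lam a z) (n : ℕ) :
    dist (z n) (z (n + 1)) ≤ |(z 1).1 - (z 0).1| * max |lam| |lam + a| ^ n := by
  have hx := abs_sub_le_geometric (u := fun k => (z k).1) (le_max_of_le_left (abs_nonneg lam))
    hz.abs_fst_sub_succ_le n
  rw [Prod.dist_eq, Real.dist_eq, Real.dist_eq, abs_sub_comm, abs_sub_comm (z n).2]
  exact max_le hx ((hz.abs_snd_sub_le n).trans hx)

lemma fst_eq_of_tendsto (hz : IsTraj lam a z) {P : ℝ × ℝ} (hP : Tendsto z atTop (𝓝 P)) :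
    P.1 = lam * P.1 + a * P.2 := by
  have hnext : Tendsto (fun n => (z (n + 1)).1) atTop (𝓝 P.1) :=
    (continuous_fst.tendsto P).comp (hP.comp (tendsto_add_atTop_nat 1))
  have hlin : Tendsto (fun n => lam * (z n).1 + a * (z n).2) atTop (𝓝 (lam * P.1 + a * P.2)) :=
    ((by fun_prop : Continuous fun p : ℝ × ℝ => lam * p.1 + a * p.2).tendsto P).comp hP
  exact tendsto_nhds_unique hnext (hlin.congr fun n => (hz.fst_succ n).symm)

end IsTraj

/-- If |λ| < 1 and |β| < 1, every trajectory converges to a fixed point. -/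
theorem stmt2 (lam a : ℝ) (h1 : |lam| < 1) (h2 : |lam + a| < 1)
    (z : ℕ → ℝ × ℝ) (hz : IsTraj lam a z) :
    ∃ s ∈ Set.Icc (-1 : ℝ) 1,
      Tendsto z atTop (𝓝 (a * s / (1 - lam), s)) := by
  obtain ⟨P, hP⟩ := cauchySeq_tendsto_of_complete
    (cauchySeq_of_le_geometric _ _ (max_lt h1 h2) hz.dist_succ_le_geometric)
  have hsnd : P.2 ∈ Set.Icc (-1 : ℝ) 1 :=
    isClosed_Icc.mem_of_tendsto ((continuous_snd.tendsto P).comp hP)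
      (Eventually.of_forall fun n => abs_le.mp (hz.1 n))
  have hfst : P.1 = a * P.2 / (1 - lam) := by
    have hlam : 1 - lam ≠ 0 := by linarith [(abs_lt.mp h1).2]
    rw [eq_div_iff hlam]
    linarith [hz.fst_eq_of_tendsto hP]
  exact ⟨P.2, hsnd, by rwa [← hfst]⟩
end

section
/- If 0 ≤ λ < 1 and β ≥ 1, then the fixed points E = (a/(1−λ), 1) and F = (−a/(1−λ), −1) are semi-stable, every other fixed point of f is unstable, and every trajectory that does not start at a fixed point converges either to E or to F. -/
open Filter Topology

-- aux
noncomputable def wfun (lam a : ℝ) (p : ℝ × ℝ) : ℝ := (1 - lam) * p.1 - a * p.2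

lemma Phi_le_one (t : ℝ) : Phi t ≤ 1 := by unfold Phi; split_ifs <;> linarith
lemma neg_one_le_Phi (t : ℝ) : -1 ≤ Phi t := by unfold Phi; split_ifs <;> linarith
lemma Phi_eq_self {t : ℝ} (h1 : -1 ≤ t) (h2 : t ≤ 1) : Phi t = t := by
  unfold Phi; split_ifs <;> linarith
lemma Phi_eq_one {t : ℝ} (h : 1 ≤ t) : Phi t = 1 := by unfold Phi; split_ifs <;> linarith
lemma le_Phi {s t : ℝ} (hst : s ≤ t) (hs : s ≤ 1) : s ≤ Phi t := by
  unfold Phi; split_ifs <;> linarith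
lemma Phi_neg (t : ℝ) : Phi (-t) = -Phi t := by unfold Phi; split_ifs <;> linarith

lemma f_fst (lam a : ℝ) (p : ℝ × ℝ) : (f lam a p).1 = p.1 - wfun lam a p := by
  simp [f, wfun]; ring

lemma f_snd (lam a : ℝ) (p : ℝ × ℝ) : (f lam a p).2 = Phi (p.2 - wfun lam a p) := by
  have h : p.2 + (lam * p.1 + a * p.2) - p.1 = p.2 - wfun lam a p := by unfold wfun; ring
  simp [f, h]

lemma wfun_f (lam a : ℝ) (p : ℝ × ℝ) :
    wfun lam a (f lam a p) = lam * wfun lam a p + a * (p.2 - Phi (p.2 - wfun lam a p)) := by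
  have h : p.2 + (lam * p.1 + a * p.2) - p.1 = p.2 - wfun lam a p := by unfold wfun; ring
  simp only [wfun, f, h]
  ring

lemma wfun_neg (lam a : ℝ) (p : ℝ × ℝ) : wfun lam a (-p) = -wfun lam a p := by
  simp [wfun]; ring

lemma f_neg (lam a : ℝ) (p : ℝ × ℝ) : f lam a (-p) = -f lam a p := by
  have h : (-p).2 + (lam * (-p).1 + a * (-p).2) - (-p).1
      = -(p.2 + (lam * p.1 + a * p.2) - p.1) := by simp; ring
  unfold f
  rw [h, Phi_neg]
  simp only [Prod.fst_neg, Prod.snd_neg, Prod.neg_mk, Prod.mk.injEq]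
  exact ⟨by ring, trivial⟩

lemma traj_neg {lam a : ℝ} {z : ℕ → ℝ × ℝ} (hz : IsTraj lam a z) :
    IsTraj lam a (fun n => -z n) := by
  refine ⟨fun n => ?_, fun n => ?_⟩
  · have := hz.1 n
    simpa [inL, abs_neg] using this
  · simp only [hz.2 n, f_neg]

lemma iter_traj (lam a : ℝ) (p0 : ℝ × ℝ) (hp : inL p0) :
    IsTraj lam a (fun n => (f lam a)^[n] p0) := by
  refine ⟨fun n => ?_, fun n => by simp only [Function.iterate_succ_apply']⟩
  cases n with
  | zero => simpa using hp
  | succ n =>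
    show |((f lam a)^[n+1] p0).2| ≤ 1
    rw [Function.iterate_succ_apply', f_snd]
    exact abs_le.mpr ⟨neg_one_le_Phi _, Phi_le_one _⟩

lemma w_step {lam a : ℝ} (ha : 0 < a) {p : ℝ × ℝ} (hp : inL p) (hw : wfun lam a p ≤ 0) :
    wfun lam a (f lam a p) ≤ lam * wfun lam a p := by
  rw [wfun_f]
  have hs := abs_le.mp hp
  have hPhi : p.2 ≤ Phi (p.2 - wfun lam a p) := le_Phi (by linarith) hs.2
  nlinarith [mul_nonneg ha.le (sub_nonneg.mpr hPhi)]

lemma w_all {lam a : ℝ} (h1 : 0 ≤ lam) (ha : 0 < a) {z : ℕ → ℝ × ℝ}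
    (hz : IsTraj lam a z) (hw0 : wfun lam a (z 0) ≤ 0) : ∀ n, wfun lam a (z n) ≤ 0 := by
  intro n
  induction n with
  | zero => exact hw0
  | succ n ih =>
    have h := w_step ha (hz.1 n) ih
    rw [← hz.2 n] at h
    nlinarith [mul_nonneg h1 (neg_nonneg.mpr ih)]

lemma reach {lam a : ℝ} (h1 : 0 ≤ lam) (h2 : lam < 1) (h3 : 1 ≤ lam + a)
    {z : ℕ → ℝ × ℝ} (hz : IsTraj lam a z) (hw0 : wfun lam a (z 0) < 0) :
    ∃ N, (z N).2 = 1 := by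
  by_contra h
  push_neg at h
  have hs1 : ∀ n, (z n).2 < 1 := fun n => lt_of_le_of_ne ((abs_le.mp (hz.1 n)).2) (h n)
  have ha : 0 < a := by linarith
  have hwall := w_all h1 ha hz hw0.le
  have key : ∀ n, wfun lam a (z n) ≤ wfun lam a (z 0) ∧
      (z 0).2 + n * (-(wfun lam a (z 0))) ≤ (z n).2 := by
    intro n
    induction n with
    | zero => simp
    | succ n ih =>
      have hwn := hwall n
      have hs := abs_le.mp (hz.1 n)
      have hsnd : (z (n+1)).2 = Phi ((z n).2 - wfun lam a (z n)) := by rw [hz.2 n, f_snd]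
      have ht1 : (z n).2 - wfun lam a (z n) ≤ 1 := by
        by_contra hgt
        push_neg at hgt
        have : (z (n+1)).2 = 1 := by rw [hsnd, Phi_eq_one hgt.le]
        exact absurd this (h _)
      have ht0 : (-1 : ℝ) ≤ (z n).2 - wfun lam a (z n) := by linarith [hs.1]
      have hseq : (z (n+1)).2 = (z n).2 - wfun lam a (z n) := by
        rw [hsnd, Phi_eq_self ht0 ht1]
      have hweq : wfun lam a (z (n+1)) = (lam + a) * wfun lam a (z n) := by
        rw [hz.2 n, wfun_f, Phi_eq_self ht0 ht1]; ring
      have hmul : (lam + a) * wfun lam a (z n) ≤ 1 * wfun lam a (z n) :=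
        mul_le_mul_of_nonpos_right h3 hwn
      constructor
      · rw [hweq]; linarith [ih.1]
      · rw [hseq]; push_cast; nlinarith [ih.2, ih.1]
  obtain ⟨n, hn⟩ := exists_nat_gt (2 / (-(wfun lam a (z 0))))
  have hwpos : 0 < -(wfun lam a (z 0)) := by linarith
  have h2lt : 2 < (n : ℝ) * (-(wfun lam a (z 0))) := by
    rw [div_lt_iff₀ hwpos] at hn; linarith
  have hk := (key n).2
  have hs0 := (abs_le.mp (hz.1 0)).1
  linarith [hs1 n]

lemma phase2 {lam a : ℝ} (h1 : 0 ≤ lam) {z : ℕ → ℝ × ℝ} (hz : IsTraj lam a z)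
    {N : ℕ} (hN : (z N).2 = 1) (hwN : wfun lam a (z N) ≤ 0) :
    ∀ k, (z (N + k)).2 = 1 ∧ wfun lam a (z (N + k)) = lam ^ k * wfun lam a (z N) := by
  intro k
  induction k with
  | zero => exact ⟨by simpa using hN, by simp⟩
  | succ k ih =>
    have hw : wfun lam a (z (N + k)) ≤ 0 := by
      rw [ih.2]
      nlinarith [pow_nonneg h1 k]
    have ht : 1 ≤ (z (N + k)).2 - wfun lam a (z (N + k)) := by rw [ih.1]; linarith
    have hstep : z (N + (k + 1)) = f lam a (z (N + k)) := hz.2 (N + k)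
    refine ⟨?_, ?_⟩
    · rw [hstep, f_snd, Phi_eq_one ht]
    · rw [hstep, wfun_f, Phi_eq_one ht, ih.1, ih.2, pow_succ]; ring

lemma conv_neg {lam a : ℝ} (h1 : 0 ≤ lam) (h2 : lam < 1) (h3 : 1 ≤ lam + a)
    {z : ℕ → ℝ × ℝ} (hz : IsTraj lam a z) (hw0 : wfun lam a (z 0) < 0) :
    Tendsto z atTop (𝓝 ((a / (1 - lam), 1) : ℝ × ℝ)) := by
  obtain ⟨N, hN⟩ := reach h1 h2 h3 hz hw0
  have ha : 0 < a := by linarith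
  have hwall := w_all h1 ha hz hw0.le
  have hph := phase2 h1 hz hN (hwall N)
  have hne : (1 : ℝ) - lam ≠ 0 := by linarith
  have hx : ∀ k, (z (N + k)).1 = (a + lam ^ k * wfun lam a (z N)) / (1 - lam) := by
    intro k
    have hw' := (hph k).2
    have hs' := (hph k).1
    rw [eq_div_iff hne]
    have hw2 : (1 - lam) * (z (N + k)).1 - a * (z (N + k)).2
        = lam ^ k * wfun lam a (z N) := hw'
    rw [hs'] at hw2
    linarith
  have hxt : Tendsto (fun k => (z (N + k)).1) atTop (𝓝 (a / (1 - lam))) := by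
    simp only [hx]
    have hpow : Tendsto (fun k : ℕ => lam ^ k) atTop (𝓝 0) :=
      tendsto_pow_atTop_nhds_zero_of_lt_one h1 h2
    have := ((hpow.mul_const (wfun lam a (z N))).const_add a).div_const (1 - lam)
    simpa using this
  have hst : Tendsto (fun k => (z (N + k)).2) atTop (𝓝 (1 : ℝ)) := by
    have hsk : ∀ k, (z (N + k)).2 = 1 := fun k => (hph k).1
    simp only [hsk]
    exact tendsto_const_nhds
  have hcomb : Tendsto (fun k => z (N + k)) atTop (𝓝 ((a / (1 - lam), 1) : ℝ × ℝ)) :=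
    (hxt.prodMk_nhds hst).congr (fun k => rfl)
  exact (tendsto_add_atTop_iff_nat N).mp (by simpa [add_comm] using hcomb)

lemma stable_neg {lam a : ℝ} (h1 : 0 ≤ lam) (h2 : lam < 1) (h3 : 1 ≤ lam + a)
    {z : ℕ → ℝ × ℝ} (hz : IsTraj lam a z) (hw0 : wfun lam a (z 0) ≤ 0) (n : ℕ) :
    dist (z n) ((a / (1 - lam), 1) : ℝ × ℝ) ≤ dist (z 0) ((a / (1 - lam), 1) : ℝ × ℝ) := by
  have ha : 0 < a := by linarith
  have hwall := w_all h1 ha hz hw0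
  have hxmono : Monotone fun n => (z n).1 := monotone_nat_of_le_succ (fun n => by
    rw [hz.2 n, f_fst]; linarith [hwall n])
  have hsmono : Monotone fun n => (z n).2 := monotone_nat_of_le_succ (fun n => by
    rw [hz.2 n, f_snd]
    exact le_Phi (by linarith [hwall n]) (abs_le.mp (hz.1 n)).2)
  have hxle : ∀ n, (z n).1 ≤ a / (1 - lam) := by
    intro n
    rw [le_div_iff₀ (by linarith : (0:ℝ) < 1 - lam)]
    have hw := hwall n
    have hs := (abs_le.mp (hz.1 n)).2
    have hmul : a * (z n).2 ≤ a * 1 := mul_le_mul_of_nonneg_left hs ha.le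
    unfold wfun at hw
    linarith
  have h0x : (z 0).1 ≤ (z n).1 := hxmono (Nat.zero_le n)
  have h0s : (z 0).2 ≤ (z n).2 := hsmono (Nat.zero_le n)
  have hs1n := (abs_le.mp (hz.1 n)).2
  rw [Prod.dist_eq, Prod.dist_eq, Real.dist_eq, Real.dist_eq, Real.dist_eq, Real.dist_eq]
  apply max_le
  · refine le_trans ?_ (le_max_left _ _)
    rw [abs_of_nonpos (by linarith [hxle n]), abs_of_nonpos (by linarith [hxle 0])]
    linarith
  · refine le_trans ?_ (le_max_right _ _)
    rw [abs_of_nonpos (by linarith), abs_of_nonpos (by linarith [(abs_le.mp (hz.1 0)).2])]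
    linarith

lemma fixed_iff {lam a : ℝ} {p : ℝ × ℝ} (hp : inL p) :
    f lam a p = p ↔ wfun lam a p = 0 := by
  constructor
  · intro h
    have h1' := congrArg Prod.fst h
    rw [f_fst] at h1'
    linarith
  · intro h
    have hs := abs_le.mp hp
    have : f lam a p = (p.1 - wfun lam a p, Phi (p.2 - wfun lam a p)) := by
      exact Prod.ext (f_fst lam a p) (f_snd lam a p)
    rw [this, h, sub_zero, sub_zero, Phi_eq_self hs.1 hs.2]

lemma V_open (lam a ρ : ℝ) : IsOpen {p : ℝ × ℝ | 0 < ρ * wfun lam a p ∧ |p.2| < 1} := by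
  apply IsOpen.and
  · exact isOpen_lt continuous_const (by unfold wfun; fun_prop)
  · exact isOpen_lt (continuous_snd.abs) continuous_const

lemma mem_frontier_of {U : Set (ℝ × ℝ)} (hU : IsOpen U) {P : ℝ × ℝ} (hP : P ∉ U)
    (hcl : ∀ ε > 0, ∃ q ∈ U, dist P q < ε) : P ∈ frontier U := by
  rw [hU.frontier_eq]
  exact ⟨Metric.mem_closure_iff.mpr hcl, hP⟩

lemma front_mem {lam a : ℝ} (h2 : lam < 1) (h3 : 1 ≤ lam + a) {P : ℝ × ℝ}
    (hP1 : (1 - lam) * P.1 = a * P.2) (hP2 : P.2 = 1 ∨ P.2 = -1) (ρ : ℝ)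
    (hρ : ρ = 1 ∨ ρ = -1) :
    P ∈ frontier {p : ℝ × ℝ | 0 < ρ * wfun lam a p ∧ |p.2| < 1} := by
  have ha : 0 < a := by linarith
  apply mem_frontier_of (V_open lam a ρ)
  · intro hm
    have := hm.2
    rcases hP2 with h | h <;> rw [h] at this <;> simp at this
  · intro ε hε
    set t := min ε 1 / 2 with ht
    have ht0 : 0 < t := by
      have : 0 < min ε 1 := lt_min hε one_pos
      positivity
    have htε : t < ε := by
      have := min_le_left ε 1
      rw [ht]; linarith
    have ht1 : t ≤ 1 / 2 := by
      have := min_le_right ε 1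
      rw [ht]; linarith
    set μ := (1 - lam) / (2 * a) with hμdef
    have hμ0 : 0 < μ := div_pos (by linarith) (by linarith)
    have hμ : μ ≤ 1 / 2 := by
      rw [hμdef, div_le_iff₀ (by linarith : (0:ℝ) < 2 * a)]; linarith
    have haμ : a * (μ * t) = (1 - lam) / 2 * t := by
      rw [← mul_assoc, hμdef]
      field_simp
    have hwP : wfun lam a P = 0 := by unfold wfun; linarith
    have hq : wfun lam a (P.1 + ρ * t, P.2 - P.2 * (μ * t))
        = (1 - lam) * (ρ * t) + a * (P.2 * (μ * t)) := by
      unfold wfun at hwP ⊢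
      simp only
      linear_combination hwP
    refine ⟨(P.1 + ρ * t, P.2 - P.2 * (μ * t)), ⟨?_, ?_⟩, ?_⟩
    · rw [hq]
      rcases hρ with hr | hr <;> rcases hP2 with hs | hs <;> rw [hr, hs] <;>
        nlinarith [ht0, h2, haμ]
    · have hμt1 : μ * t ≤ 1 / 4 := by nlinarith
      have hμt0 : 0 < μ * t := mul_pos hμ0 ht0
      simp only
      rcases hP2 with hs | hs <;> rw [hs] <;> rw [abs_lt] <;> constructor <;> nlinarith
    · rw [Prod.dist_eq, Real.dist_eq, Real.dist_eq]
      simp only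
      have e1 : P.1 - (P.1 + ρ * t) = -(ρ * t) := by ring
      have e2 : P.2 - (P.2 - P.2 * (μ * t)) = P.2 * (μ * t) := by ring
      rw [e1, e2, abs_neg]
      have hρt : |ρ * t| = t := by
        rcases hρ with hr | hr <;> rw [hr] <;>
          simp [abs_of_nonneg ht0.le, abs_of_nonpos, ht0.le]
      have hP2t : |P.2 * (μ * t)| = μ * t := by
        rcases hP2 with hs | hs <;> rw [hs] <;>
          simp [abs_of_nonneg (mul_pos hμ0 ht0).le]
      rw [hρt, hP2t]
      apply max_lt htε
      nlinarith

/-- Case (b) main theorem. -/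
theorem stmt3 (lam a : ℝ) (h1 : 0 ≤ lam) (h2 : lam < 1) (h3 : 1 ≤ lam + a) :
    IsSemiStable lam a (a / (1 - lam), 1) ∧
    IsSemiStable lam a (-(a / (1 - lam)), -1) ∧
    (∀ P ∈ fixedSet lam a, P ≠ (a / (1 - lam), 1) → P ≠ (-(a / (1 - lam)), -1) →
      ¬ IsStableFixed lam a P) ∧
    (∀ z : ℕ → ℝ × ℝ, IsTraj lam a z → z 0 ∉ fixedSet lam a →
      Tendsto z atTop (𝓝 ((a / (1 - lam), 1) : ℝ × ℝ)) ∨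
      Tendsto z atTop (𝓝 ((-(a / (1 - lam)), -1) : ℝ × ℝ))) := by
  have ha : 0 < a := by linarith
  have hne : (1 : ℝ) - lam ≠ 0 := by linarith
  have hEfix : (1 - lam) * ((a / (1 - lam), 1) : ℝ × ℝ).1 = a * ((a / (1 - lam), 1) : ℝ × ℝ).2 := by
    simp only
    field_simp
  have hFfix : (1 - lam) * ((-(a / (1 - lam)), -1) : ℝ × ℝ).1
      = a * ((-(a / (1 - lam)), -1) : ℝ × ℝ).2 := by
    simp only
    field_simp
  have hEF : ((a / (1 - lam), 1) : ℝ × ℝ) = -((-(a / (1 - lam)), -1) : ℝ × ℝ) := by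
    simp
  -- escape lemma: if w(z 0) > 0 then some iterate has second coordinate -1
  have escape_pos : ∀ z : ℕ → ℝ × ℝ, IsTraj lam a z → 0 < wfun lam a (z 0) →
      ∃ N, (z N).2 = -1 := by
    intro z hz hw
    have hz' := traj_neg hz
    have hw' : wfun lam a (-(z 0)) < 0 := by rw [wfun_neg]; linarith
    obtain ⟨N, hN⟩ := reach h1 h2 h3 hz' hw'
    refine ⟨N, ?_⟩
    have : -(z N).2 = 1 := hN
    linarith
  -- dist lower bound via second coordinates
  have dist_snd : ∀ (p q : ℝ × ℝ), |p.2 - q.2| ≤ dist p q := by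
    intro p q
    rw [Prod.dist_eq, Real.dist_eq]
    exact le_max_right _ _
  refine ⟨?_, ?_, ?_, ?_⟩
  · -- semistability of E
    refine ⟨{p : ℝ × ℝ | 0 < (-1) * wfun lam a p ∧ |p.2| < 1},
      {p : ℝ × ℝ | 0 < (1 : ℝ) * wfun lam a p ∧ |p.2| < 1},
      V_open lam a (-1), V_open lam a 1, fun p hp => hp.2, fun p hp => hp.2,
      front_mem h2 h3 hEfix (Or.inl rfl) (-1) (Or.inr rfl),
      front_mem h2 h3 hEfix (Or.inl rfl) 1 (Or.inl rfl), ?_, ?_⟩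
    · intro ε hε
      refine ⟨ε, hε, fun z hz hU hd n => ?_⟩
      have hw : wfun lam a (z 0) ≤ 0 := by have := hU.1; linarith
      exact lt_of_le_of_lt (stable_neg h1 h2 h3 hz hw n) hd
    · refine ⟨1, one_pos, fun z hz hU => ?_⟩
      have hw : 0 < wfun lam a (z 0) := by have := hU.1; linarith
      obtain ⟨N, hN⟩ := escape_pos z hz hw
      refine ⟨N, ?_⟩
      have h2d := dist_snd (z N) ((a / (1 - lam), 1) : ℝ × ℝ)
      rw [hN] at h2d
      norm_num at h2d
      linarith
  · -- semistability of F
    refine ⟨{p : ℝ × ℝ | 0 < (1 : ℝ) * wfun lam a p ∧ |p.2| < 1},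
      {p : ℝ × ℝ | 0 < (-1) * wfun lam a p ∧ |p.2| < 1},
      V_open lam a 1, V_open lam a (-1), fun p hp => hp.2, fun p hp => hp.2,
      front_mem h2 h3 hFfix (Or.inr rfl) 1 (Or.inl rfl),
      front_mem h2 h3 hFfix (Or.inr rfl) (-1) (Or.inr rfl), ?_, ?_⟩
    · intro ε hε
      refine ⟨ε, hε, fun z hz hU hd n => ?_⟩
      have hw : 0 < wfun lam a (z 0) := by have := hU.1; linarith
      have hz' := traj_neg hz
      have hw' : wfun lam a (-(z 0)) ≤ 0 := by rw [wfun_neg]; linarith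
      have key := stable_neg h1 h2 h3 hz' hw' n
      rw [hEF, dist_neg_neg, dist_neg_neg] at key
      exact lt_of_le_of_lt key hd
    · refine ⟨1, one_pos, fun z hz hU => ?_⟩
      have hw : wfun lam a (z 0) < 0 := by have := hU.1; linarith
      obtain ⟨N, hN⟩ := reach h1 h2 h3 hz hw
      refine ⟨N, ?_⟩
      have h2d := dist_snd (z N) ((-(a / (1 - lam)), -1) : ℝ × ℝ)
      rw [hN] at h2d
      norm_num at h2d
      linarith
  · -- instability of interior fixed points
    intro P hP hPE hPF hstable
    obtain ⟨hPL, hPfix⟩ := hP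
    have hwP : wfun lam a P = 0 := (fixed_iff hPL).mp hPfix
    have hs := abs_le.mp hPL
    have hslt : P.2 < 1 := by
      rcases lt_or_eq_of_le hs.2 with h | h
      · exact h
      · exfalso
        apply hPE
        have hx : P.1 = a / (1 - lam) := by
          rw [eq_div_iff hne]
          unfold wfun at hwP
          nlinarith
        exact Prod.ext hx h
    obtain ⟨δ, hδ, hδ'⟩ := hstable ((1 - P.2) / 2) (by linarith)
    set p0 : ℝ × ℝ := (P.1 - δ / 2, P.2) with hp0
    have hp0L : inL p0 := hPL
    set z : ℕ → ℝ × ℝ := fun n => (f lam a)^[n] p0 with hzdef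
    have hz : IsTraj lam a z := iter_traj lam a p0 hp0L
    have hz0 : z 0 = p0 := rfl
    have hd0 : dist (z 0) P < δ := by
      rw [hz0, hp0, Prod.dist_eq, Real.dist_eq, Real.dist_eq]
      simp only
      apply max_lt
      · rw [show P.1 - δ / 2 - P.1 = -(δ / 2) by ring, abs_neg, abs_of_nonneg (by linarith)]
        linarith
      · simp
        linarith
    have hw0 : wfun lam a (z 0) < 0 := by
      rw [hz0, hp0]
      unfold wfun at hwP ⊢
      simp only
      nlinarith
    obtain ⟨N, hN⟩ := reach h1 h2 h3 hz hw0
    have hclose := hδ' z hz hd0 N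
    have hfar := dist_snd (z N) P
    rw [hN] at hfar
    rw [abs_of_nonneg (by linarith)] at hfar
    linarith
  · -- global convergence
    intro z hz hnfix
    have hL := hz.1 0
    have hw : wfun lam a (z 0) ≠ 0 := fun h => hnfix ⟨hL, (fixed_iff hL).mpr h⟩
    rcases hw.lt_or_gt with hneg | hpos
    · exact Or.inl (conv_neg h1 h2 h3 hz hneg)
    · right
      have hz' := traj_neg hz
      have hw' : wfun lam a (-(z 0)) < 0 := by rw [wfun_neg]; linarith
      have hconv := (conv_neg h1 h2 h3 hz' hw').neg
      simp only [neg_neg] at hconv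
      rw [hEF, neg_neg] at hconv
      exact hconv
end

section
/- If |λ| < 1 and β < −1, then the points Q = (−a/(1+λ), 1) and −Q = (a/(1+λ), −1) form a 2-periodic orbit of f, i.e., f(Q) = −Q and f(−Q) = Q; moreover the first coordinate of Q satisfies −a/(1+λ) > 1. -/
open Filter Topology

/-- If |λ| < 1 and β < −1, the points ±Q = (∓a/(1+λ), ±1) form a 2-periodic orbit of f,
and the first coordinate of Q exceeds 1. -/
theorem stmt4 (lam a : ℝ) (h1 : |lam| < 1) (h2 : lam + a < -1) :
    f lam a (-(a / (1 + lam)), 1) = (a / (1 + lam), -1) ∧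
    f lam a (a / (1 + lam), -1) = (-(a / (1 + lam)), 1) ∧
    1 < -(a / (1 + lam)) := by
  obtain ⟨hl1, hl2⟩ := abs_lt.mp h1
  have hpos : (0:ℝ) < 1 + lam := by linarith
  have hne : (1 + lam) ≠ 0 := ne_of_gt hpos
  have key : a / (1 + lam) < -1 := by
    rw [div_lt_iff₀ hpos]; linarith
  refine ⟨?_, ?_, by linarith⟩
  · simp only [f, Phi, Prod.mk.injEq]
    constructor
    · field_simp; ring
    · have hx : lam * -(a / (1 + lam)) + a * 1 = a / (1 + lam) := by field_simp; ring
      rw [hx]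
      rw [if_pos (by linarith)]
  · simp only [f, Phi, Prod.mk.injEq]
    constructor
    · field_simp; ring
    · have hx : lam * (a / (1 + lam)) + a * -1 = -(a / (1 + lam)) := by field_simp; ring
      rw [hx]
      rw [if_neg (by linarith), if_neg (by push_neg; linarith)]
end

section
/- Define the parallelogram Π = {(x,s) : |x − s| ≤ |a/(1−λ) − 1|, |s| ≤ 1}. If either 0 ≤ λ < 1 and β ≤ 0, or −1 < λ ≤ 0 and −1 ≤ β ≤ 0, then Π is invariant under the map f, i.e., f(Π) ⊆ Π. -/
open Filter Topology

/-- The parallelogram Π. -/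
def ParPi (lam a : ℝ) : Set (ℝ × ℝ) :=
  {p | |p.1 - p.2| ≤ |a / (1 - lam) - 1| ∧ |p.2| ≤ 1}

/-!
Write `c = |a/(1-λ) - 1| = (1-β)/(1-λ)` for the half-width of `Π` and `d = x - s`. Then
`x' = λ d + β s` and the clipped quantity is `s + x' - x = x' - d`. On `Π` one has
`|x'| ≤ |λ| c + |β| ≤ 1 + c`; without clipping `x' - s' = d`, and when `x' - d` is clipped
to `±1` the new difference `x' ∓ 1` lies between `d` and `±c`.
-/

theorem abs_Phi_le_one (t : ℝ) : |Phi t| ≤ 1 := by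
  unfold Phi
  split_ifs <;> rw [abs_le] <;> constructor <;> linarith

theorem abs_sub_Phi_sub_le {u d c : ℝ} (hu : |u| ≤ 1 + c) (hd : |d| ≤ c) :
    |u - Phi (u - d)| ≤ c := by
  rw [abs_le] at hu hd
  unfold Phi
  split_ifs <;> rw [abs_le] <;> constructor <;> linarith

theorem one_sub_mul_abs_div_one_sub_sub_one {lam a : ℝ} (hlam : lam < 1) (hb : lam + a ≤ 1) :
    (1 - lam) * |a / (1 - lam) - 1| = 1 - (lam + a) := by
  have hpos : 0 < 1 - lam := sub_pos.mpr hlam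
  have hrw : a / (1 - lam) - 1 = -((1 - (lam + a)) / (1 - lam)) := by
    field_simp
    ring
  rw [hrw, abs_neg, abs_of_nonneg (div_nonneg (by linarith) hpos.le),
    mul_div_cancel₀ _ hpos.ne']

/-- Since `(1 - λ) c = 1 - β`, for `λ ≥ 0` this reduces to `β ≤ 1` and for `λ ≤ 0` to
`(1 + λ) c + 1 + β ≥ 0`. -/
theorem abs_mul_add_abs_le_one_add {lam a : ℝ}
    (h : (0 ≤ lam ∧ lam < 1 ∧ lam + a ≤ 0) ∨
         (-1 < lam ∧ lam ≤ 0 ∧ -1 ≤ lam + a ∧ lam + a ≤ 0)) :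
    |lam| * |a / (1 - lam) - 1| + |lam + a| ≤ 1 + |a / (1 - lam) - 1| := by
  rcases h with ⟨hl0, hl1, hb⟩ | ⟨hl1, hl0, hb1, hb⟩
  · have hwidth := one_sub_mul_abs_div_one_sub_sub_one (a := a) hl1 (by linarith)
    rw [abs_of_nonneg hl0, abs_of_nonpos hb]
    linarith
  · have hwidth := one_sub_mul_abs_div_one_sub_sub_one (lam := lam) (a := a)
      (by linarith) (by linarith)
    rw [abs_of_nonpos hl0, abs_of_nonpos hb]
    nlinarith [mul_nonneg (by linarith : (0 : ℝ) ≤ 1 + lam) (abs_nonneg (a / (1 - lam) - 1))]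

theorem abs_fst_f_le {lam a : ℝ}
    (h : (0 ≤ lam ∧ lam < 1 ∧ lam + a ≤ 0) ∨
         (-1 < lam ∧ lam ≤ 0 ∧ -1 ≤ lam + a ∧ lam + a ≤ 0))
    {p : ℝ × ℝ} (hp : p ∈ ParPi lam a) :
    |(f lam a p).1| ≤ 1 + |a / (1 - lam) - 1| := by
  obtain ⟨hd, hs⟩ := hp
  calc |(f lam a p).1| = |lam * (p.1 - p.2) + (lam + a) * p.2| := by
        simp only [f]; ring_nf
    _ ≤ |lam| * |p.1 - p.2| + |lam + a| * |p.2| := by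
        simpa only [abs_mul] using abs_add_le (lam * (p.1 - p.2)) ((lam + a) * p.2)
    _ ≤ |lam| * |a / (1 - lam) - 1| + |lam + a| := by
        gcongr
        exact mul_le_of_le_one_right (abs_nonneg _) hs
    _ ≤ 1 + |a / (1 - lam) - 1| := abs_mul_add_abs_le_one_add h

/-- Lemma 3: for 0 ≤ λ < 1, β ≤ 0, and for −1 < λ ≤ 0, −1 ≤ β ≤ 0, the
parallelogram Π is invariant under f. -/
theorem stmt16 (lam a : ℝ)
    (h : (0 ≤ lam ∧ lam < 1 ∧ lam + a ≤ 0) ∨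
         (-1 < lam ∧ lam ≤ 0 ∧ -1 ≤ lam + a ∧ lam + a ≤ 0)) :
    f lam a '' ParPi lam a ⊆ ParPi lam a := by
  rintro _ ⟨p, hp, rfl⟩
  have hsnd : (f lam a p).2 = Phi ((f lam a p).1 - (p.1 - p.2)) := by
    simp only [f]; ring_nf
  refine ⟨?_, abs_Phi_le_one _⟩
  rw [hsnd]
  exact abs_sub_Phi_sub_le (abs_fst_f_le h hp) hp.1
end

section
/- Suppose 0 < λ < 1 and β < −1, and let AB denote the segment {(x, 1) : (a+2)/(1−λ) ≤ x ≤ (1/λ)(−(a+2)/(1−λ) − a)} on the line s = 1. Then f²(AB) ⊆ AB, the restriction of f² to AB acts on first coordinates by x ↦ λ²x + λa − a (hence is a contraction with factor λ² < 1), and every trajectory starting in AB converges to the 2-periodic point Q = (−a/(1+λ), 1). -/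
open Filter Topology

/-- The segment AB on the line s = 1. -/
def segAB (lam a : ℝ) : Set (ℝ × ℝ) :=
  {p | p.2 = 1 ∧ (a + 2) / (1 - lam) ≤ p.1 ∧
       p.1 ≤ (1 / lam) * (-(a + 2) / (1 - lam) - a)}

lemma Phi_eq_neg_one {t : ℝ} (h : t ≤ -1) : Phi t = -1 := by
  unfold Phi; split_ifs <;> linarith

/-- Lemma 4: for 0 < λ < 1, β < −1, the segment AB is invariant under f², on which f²
acts on first coordinates by x ↦ λ²x + λa − a, and every trajectory starting in AB
converges to the 2-periodic point Q = (−a/(1+λ), 1). -/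
theorem stmt17 (lam a : ℝ) (h1 : 0 < lam) (h2 : lam < 1) (h3 : lam + a < -1) :
    ((f lam a)^[2] '' segAB lam a ⊆ segAB lam a) ∧
    (∀ p ∈ segAB lam a, ((f lam a)^[2] p).1 = lam ^ 2 * p.1 + lam * a - a) ∧
    (∀ z : ℕ → ℝ × ℝ, IsTraj lam a z → z 0 ∈ segAB lam a →
      Tendsto (fun n => z (2 * n)) atTop (𝓝 ((-(a / (1 + lam)), 1) : ℝ × ℝ))) := by
  have hlam1 : (0:ℝ) < 1 - lam := by linarith
  set q : ℝ := -a / (1 + lam) with hq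
  have h1l : (1:ℝ) + lam ≠ 0 := by positivity
  have hqfix : lam ^ 2 * q + lam * a - a = q := by
    rw [hq]; field_simp; ring
  -- key computation of f² on the segment
  have key : ∀ p ∈ segAB lam a, (f lam a)^[2] p = (lam ^ 2 * p.1 + lam * a - a, 1) := by
    rintro ⟨x, s⟩ ⟨hs, hl, hr⟩
    simp only at hs hl hr
    subst hs
    have hA : a + 2 ≤ x * (1 - lam) := (div_le_iff₀ hlam1).mp hl
    have hB : (lam * x + a) * (1 - lam) ≤ -(a + 2) := by
      have h' : lam * x + a ≤ -(a + 2) / (1 - lam) := by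
        have := mul_le_mul_of_nonneg_left hr h1.le
        have heq : lam * ((1 / lam) * (-(a + 2) / (1 - lam) - a)) =
            -(a + 2) / (1 - lam) - a := by field_simp
        linarith [heq ▸ this]
      linarith [(le_div_iff₀ hlam1).mp h']
    have step1 : f lam a (x, 1) = (lam * x + a, -1) := by
      have hr1 : f lam a (x, 1) = (lam * x + a * 1, Phi (1 + (lam * x + a * 1) - x)) := rfl
      rw [hr1, Phi_eq_neg_one (by nlinarith)]
      norm_num
    have step2 : f lam a (lam * x + a, -1) = (lam ^ 2 * x + lam * a - a, 1) := by
      have hr2 : f lam a (lam * x + a, -1) =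
          (lam * (lam * x + a) + a * (-1),
           Phi (-1 + (lam * (lam * x + a) + a * (-1)) - (lam * x + a))) := rfl
      rw [hr2, Phi_eq_one (by nlinarith)]
      norm_num; ring
    show f lam a (f lam a (x, 1)) = _
    rw [step1, step2]
  -- invariance
  have inv : ∀ p ∈ segAB lam a, (f lam a)^[2] p ∈ segAB lam a := by
    intro p hp
    obtain ⟨hs, hl, hr⟩ := hp
    rw [key p ⟨hs, hl, hr⟩]
    refine ⟨rfl, ?_, ?_⟩
    · show (a + 2) / (1 - lam) ≤ lam ^ 2 * p.1 + lam * a - a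
      rw [div_le_iff₀ hlam1]
      have hA : a + 2 ≤ p.1 * (1 - lam) := (div_le_iff₀ hlam1).mp hl
      nlinarith [mul_le_mul_of_nonneg_left hA (sq_nonneg lam)]
    · show lam ^ 2 * p.1 + lam * a - a ≤ (1 / lam) * (-(a + 2) / (1 - lam) - a)
      have hB : (lam * p.1 + a) * (1 - lam) ≤ -(a + 2) := by
        have h' : lam * p.1 + a ≤ -(a + 2) / (1 - lam) := by
          have := mul_le_mul_of_nonneg_left hr h1.le
          have heq : lam * ((1 / lam) * (-(a + 2) / (1 - lam) - a)) =
              -(a + 2) / (1 - lam) - a := by field_simp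
          linarith [heq ▸ this]
        linarith [(le_div_iff₀ hlam1).mp h']
      rw [show (1 / lam) * (-(a + 2) / (1 - lam) - a) =
            (-(a + 2) / (1 - lam) - a) / lam by ring, le_div_iff₀ h1, ← sub_nonneg]
      have hC : -(a + 2) / (1 - lam) * (1 - lam) = -(a + 2) :=
        div_mul_cancel₀ _ (ne_of_gt hlam1)
      have h0 : 0 * (1 - lam) ≤
          (-(a + 2) / (1 - lam) - a - (lam ^ 2 * p.1 + lam * a - a) * lam) * (1 - lam) := by
        nlinarith [mul_le_mul_of_nonneg_left hB (sq_nonneg lam), hC,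
          mul_nonneg hlam1.le (show (0:ℝ) ≤ -(2 * a + 2 + 2 * lam) by linarith)]
      exact le_of_mul_le_mul_right h0 hlam1
  refine ⟨?_, ?_, ?_⟩
  · rintro _ ⟨p, hp, rfl⟩; exact inv p hp
  · intro p hp; rw [key p hp]
  · intro z hz h0
    obtain ⟨hzL, hzf⟩ := hz
    have hstep : ∀ n, z (2 * (n + 1)) = (f lam a)^[2] (z (2 * n)) := by
      intro n
      have h2n : 2 * (n + 1) = (2 * n + 1) + 1 := by ring
      rw [h2n, hzf, hzf]; rfl
    have hmem : ∀ n, z (2 * n) ∈ segAB lam a ∧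
        (z (2 * n)).1 = (lam ^ 2) ^ n * ((z 0).1 - q) + q := by
      intro n
      induction n with
      | zero => exact ⟨by simpa using h0, by simp⟩
      | succ n ih =>
        refine ⟨by rw [hstep n]; exact inv _ ih.1, ?_⟩
        rw [hstep n, key _ ih.1]
        show lam ^ 2 * (z (2 * n)).1 + lam * a - a = _
        rw [ih.2]
        have : lam ^ 2 * ((lam ^ 2) ^ n * ((z 0).1 - q) + q) + lam * a - a
            = (lam ^ 2) ^ (n + 1) * ((z 0).1 - q) + (lam ^ 2 * q + lam * a - a) := by ring
        rw [this, hqfix]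
    have heq : ∀ n, z (2 * n) = ((lam ^ 2) ^ n * ((z 0).1 - q) + q, 1) := by
      intro n
      exact Prod.ext (hmem n).2 (hmem n).1.1
    have hQ : ((-(a / (1 + lam)), 1) : ℝ × ℝ) = (q, 1) := by
      rw [hq, neg_div]
    rw [hQ]
    simp only [heq]
    have hp : Tendsto (fun n : ℕ => (lam ^ 2) ^ n) atTop (𝓝 0) :=
      tendsto_pow_atTop_nhds_zero_of_lt_one (by positivity) (by nlinarith)
    have h1st : Tendsto (fun n : ℕ => (lam ^ 2) ^ n * ((z 0).1 - q) + q) atTop (𝓝 q) := by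
      have := (hp.mul_const ((z 0).1 - q)).add_const q
      simpa using this
    exact h1st.prodMk_nhds tendsto_const_nhds
end

section
/- Let −1 < λ < 0 and β = λ + a > 1, and let k₀ be the smallest positive integer k such that 1 + λβ^k ≤ 0 (such k₀ exists since β > 1 and λ < 0). Then the pair of inequalities 1 + λβ^k < 0 and λβ^k + a − 1 ≥ 0 holds for at most one integer k ≥ k₀, and if it holds for some k ≥ k₀ then necessarily k = k₀. -/
/-- Lemma 7: let k₀ be the smallest positive integer k with 1 + λβ^k ≤ 0. The pair of
inequalities 1 + λβ^k < 0 and λβ^k + a − 1 ≥ 0 can hold for at most one k ≥ k₀, and if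
it holds for some k ≥ k₀ then k = k₀. -/
theorem stmt19 (lam a : ℝ) (h1 : -1 < lam) (h2 : lam < 0) (h3 : 1 < lam + a)
    (k₀ : ℕ) (hk₀ : 1 ≤ k₀) (hle : 1 + lam * (lam + a) ^ k₀ ≤ 0)
    (hmin : ∀ j : ℕ, 1 ≤ j → j < k₀ → 0 < 1 + lam * (lam + a) ^ j) :
    ∀ k : ℕ, k₀ ≤ k → 1 + lam * (lam + a) ^ k < 0 →
      0 ≤ lam * (lam + a) ^ k + a - 1 → k = k₀ := by
  intro k hk hlt hge
  by_contra hne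
  have hk' : k₀ + 1 ≤ k := lt_of_le_of_ne hk (Ne.symm hne)
  set b := lam + a with hb
  have hb1 : (1:ℝ) ≤ b := le_of_lt h3
  have hpow : b ^ (k₀ + 1) ≤ b ^ k := pow_le_pow_right₀ hb1 hk'
  have h5 : lam * b ^ k ≤ lam * b ^ (k₀ + 1) :=
    mul_le_mul_of_nonpos_left hpow (le_of_lt h2)
  have h6 : lam * b ^ (k₀ + 1) ≤ -1 * b := by
    rw [pow_succ, ← mul_assoc]
    exact mul_le_mul_of_nonneg_right (by linarith) (by linarith)
  linarith
end
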